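/- Let L be a positive integer, let a, M be positive integers dividing L, and let g ∈ ℂ^L generate a Gabor frame G(g,a,M) with frame operator S. Then the canonical dual window γ = S^{−1}g is a dual window for g, and it is the unique minimizer of the ℓ²-norm among all dual windows: for every dual window h ∈ ℂ^L with h ≠ γ, ‖γ‖₂ < ‖h‖₂. -/

import Mathlib

/-!
The frame operator `S` commutes with the lattice time–frequency shifts `M_{m/M} T_{na}`:
conjugating the sum defining `S` by such a shift only reindexes it, each term picking up a
unimodular factor together with its conjugate. With self-adjointness this gives
`⟨f, M_{m/M} T_{na} γ⟩ = ⟨S⁻¹f, M_{m/M} T_{na} g⟩`, so analysis with `γ` followed by synthesis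
with `g` is `S S⁻¹ = id`.

If `h` is another dual window and `u = h - γ`, the mixed operator `f ↦ ∑ ⟨f, u_{m,n}⟩ g_{m,n}`
vanishes, hence so do its adjoint `f ↦ ∑ ⟨f, g_{m,n}⟩ u_{m,n}` and, by the same identity,
`f ↦ ∑ ⟨f, γ_{m,n}⟩ u_{m,n}`. The trace of the latter is
`∑_{m,n} ⟨u_{m,n}, γ_{m,n}⟩ = (L/a) M ⟨u, γ⟩`, so `u ⟂ γ` and Pythagoras gives
`‖h‖² = ‖γ‖² + ‖u‖²`.
-/

/-- The Gabor atom `M_{m/M} T_n g` on `ℂ^L` (identified with `ZMod L → ℂ`):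
circular translation by `n` followed by modulation `e^{2πiml/M}`. -/
noncomputable def gaborAtom (L M : ℕ) [NeZero L] (g : ZMod L → ℂ) (m n : ℕ) :
    ZMod L → ℂ :=
  fun l => g (l - (n : ZMod L)) *
    Complex.exp (2 * Real.pi * Complex.I * (m : ℂ) * (l.val : ℂ) / (M : ℂ))

/-- The inner product `⟨f, g⟩ = ∑_{l=0}^{L-1} f[l]·conj(g[l])` on `ℂ^L`. -/
noncomputable def ipL (L : ℕ) [NeZero L] (f g : ZMod L → ℂ) : ℂ :=
  ∑ l : ZMod L, f l * star (g l)

/-- The Gabor frame operator of `G(g,a,M)` on `ℂ^L`: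
`Sf = ∑_{n=0}^{L/a-1} ∑_{m=0}^{M-1} ⟨f, g_{m,n}⟩ g_{m,n}` with `g_{m,n} = M_{m/M}T_{na}g`. -/
noncomputable def frameOp (L a M : ℕ) [NeZero L] (g : ZMod L → ℂ)
    (f : ZMod L → ℂ) : ZMod L → ℂ :=
  fun l => ∑ n : Fin (L / a), ∑ m : Fin M,
    ipL L f (gaborAtom L M g m ((n : ℕ) * a)) * gaborAtom L M g m ((n : ℕ) * a) l

/-- `h` is a dual window for `g` in `G(g,a,M)`:
`f = ∑_{m,n} ⟨f, M_{m/M}T_{na}h⟩ · M_{m/M}T_{na}g` for every `f ∈ ℂ^L`. -/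
noncomputable def IsDualWindow (L a M : ℕ) [NeZero L] (g h : ZMod L → ℂ) : Prop :=
  ∀ f : ZMod L → ℂ, ∀ l : ZMod L,
    f l = ∑ n : Fin (L / a), ∑ m : Fin M,
      ipL L f (gaborAtom L M h m ((n : ℕ) * a)) * gaborAtom L M g m ((n : ℕ) * a) l

open Finset Function

theorem Function.Periodic.sum_fin_add {β : Type*} [AddCommMonoid β] {F : ℕ → β} {N : ℕ}
    (hF : Periodic F N) (k : ℕ) : ∑ i : Fin N, F (i + k) = ∑ i : Fin N, F i := by
  rcases N.eq_zero_or_pos with rfl | hN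
  · simp
  have : NeZero N := ⟨hN.ne'⟩
  refine Fintype.sum_equiv (Equiv.addRight (Fin.ofNat N k)) _ _ fun i => ?_
  rw [Equiv.coe_addRight, Fin.val_add, Fin.val_ofNat, Nat.add_mod_mod, hF.map_mod_nat]

theorem exp_two_pi_I_natCast_div_eq_of_modEq {M s t : ℕ} (h : s ≡ t [MOD M]) :
    Complex.exp (2 * Real.pi * Complex.I * s / M)
      = Complex.exp (2 * Real.pi * Complex.I * t / M) := by
  rcases eq_or_ne M 0 with rfl | hM
  · simp
  obtain ⟨k, hk⟩ := h.dvd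
  rw [Complex.exp_eq_exp_iff_exists_int]
  refine ⟨-k, ?_⟩
  have hk' : (t : ℂ) = s + M * k := by exact_mod_cast (sub_eq_iff_eq_add'.mp hk)
  rw [hk']
  field_simp
  push_cast
  ring

noncomputable def modChar (L M : ℕ) [NeZero L] (m : ℕ) (l : ZMod L) : ℂ :=
  Complex.exp (2 * Real.pi * Complex.I * (m : ℂ) * (l.val : ℂ) / (M : ℂ))

section modChar

variable {L M : ℕ} [NeZero L]

theorem gaborAtom_apply (g : ZMod L → ℂ) (m n : ℕ) (l : ZMod L) :
    gaborAtom L M g m n l = g (l - n) * modChar L M m l := rfl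

theorem modChar_zero (l : ZMod L) : modChar L M 0 l = 1 := by
  simp [modChar]

theorem modChar_add_left (m m' : ℕ) (l : ZMod L) :
    modChar L M (m + m') l = modChar L M m l * modChar L M m' l := by
  rw [modChar, modChar, modChar, ← Complex.exp_add]
  push_cast
  ring_nf

theorem modChar_eq (m : ℕ) (l : ZMod L) :
    modChar L M m l = Complex.exp (2 * Real.pi * Complex.I * ((m * l.val : ℕ) : ℂ) / M) := by
  rw [modChar, Nat.cast_mul, mul_assoc _ (m : ℂ)]

theorem modChar_periodic (l : ZMod L) : Periodic (modChar L M · l) M := by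
  intro m
  simp only [modChar_eq]
  refine exp_two_pi_I_natCast_div_eq_of_modEq ?_
  simp [Nat.ModEq, add_mul, Nat.add_mul_mod_self_left]

theorem modChar_add (hML : M ∣ L) (m : ℕ) (l l' : ZMod L) :
    modChar L M m (l + l') = modChar L M m l * modChar L M m l' := by
  have hval : (l + l').val ≡ l.val + l'.val [MOD M] := by
    rw [ZMod.val_add]
    exact (Nat.mod_modEq _ L).of_dvd hML
  rw [modChar_eq, modChar_eq, modChar_eq, exp_two_pi_I_natCast_div_eq_of_modEq (hval.mul_left m),
    ← Complex.exp_add]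
  push_cast
  ring_nf

theorem star_modChar_mul_self (m : ℕ) (l : ZMod L) :
    star (modChar L M m l) * modChar L M m l = 1 := by
  have hθ : 2 * Real.pi * Complex.I * ((m * l.val : ℕ) : ℂ) / M
      = ((2 * Real.pi * (m * l.val : ℕ) / M : ℝ) : ℂ) * Complex.I := by
    push_cast
    ring
  rw [mul_comm, Complex.star_def, Complex.mul_conj, Complex.normSq_eq_norm_sq, modChar_eq, hθ,
    Complex.norm_exp_ofReal_mul_I]
  simp

end modChar

section gaborAtom

variable {L M : ℕ} [NeZero L]

theorem gaborAtom_zero_zero (g : ZMod L → ℂ) : gaborAtom L M g 0 0 = g := by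
  funext l
  simp [gaborAtom_apply, modChar_zero]

theorem gaborAtom_periodic (g : ZMod L → ℂ) (n : ℕ) : Periodic (gaborAtom L M g · n) M := by
  intro m
  funext l
  simp only [gaborAtom_apply, modChar_periodic l m]

theorem gaborAtom_add (hML : M ∣ L) (g : ZMod L → ℂ) (m m' n n' : ℕ) (l : ZMod L) :
    gaborAtom L M g (m + m') (n + n') l
      = modChar L M m n' * modChar L M m' l * gaborAtom L M g m n (l - n') := by
  have hχ : modChar L M m l = modChar L M m (l - n') * modChar L M m n' := by
    rw [← modChar_add hML, sub_add_cancel]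
  rw [gaborAtom_apply, gaborAtom_apply, modChar_add_left, hχ, Nat.cast_add, sub_sub,
    add_comm (n : ZMod L)]
  ring

theorem ipL_gaborAtom_add (hML : M ∣ L) (f w : ZMod L → ℂ) (m m' n n' : ℕ) :
    ipL L (gaborAtom L M f m' n') (gaborAtom L M w (m + m') (n + n'))
      = star (modChar L M m n') * ipL L f (gaborAtom L M w m n) := by
  rw [ipL, ← Equiv.sum_comp (Equiv.addRight (n' : ZMod L)), ipL, Finset.mul_sum]
  refine sum_congr rfl fun q _ => ?_
  simp only [Equiv.coe_addRight, gaborAtom_add hML, gaborAtom_apply f, add_sub_cancel_right,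
    star_mul']
  linear_combination (f q * star (modChar L M m n') * star (gaborAtom L M w m n q)) *
    star_modChar_mul_self (M := M) m' (q + (n' : ZMod L))

theorem ipL_gaborAtom_gaborAtom (hML : M ∣ L) (f w : ZMod L → ℂ) (m n : ℕ) :
    ipL L (gaborAtom L M f m n) (gaborAtom L M w m n) = ipL L f w := by
  simpa [modChar_zero, gaborAtom_zero_zero] using ipL_gaborAtom_add hML f w 0 m 0 n

end gaborAtom

theorem gaborAtom_add_div_mul {L M a : ℕ} [NeZero L] (haL : a ∣ L) (g : ZMod L → ℂ)
    (m n : ℕ) :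
    gaborAtom L M g m ((n + L / a) * a) = gaborAtom L M g m (n * a) := by
  funext l
  rw [gaborAtom_apply, gaborAtom_apply, add_mul, Nat.div_mul_cancel haL, Nat.cast_add,
    ZMod.natCast_self, add_zero]

theorem frameOp_gaborAtom {L a M : ℕ} [NeZero L] (haL : a ∣ L) (hML : M ∣ L)
    (g h : ZMod L → ℂ) (m' n' : ℕ) :
    frameOp L a M g (gaborAtom L M h m' (n' * a))
      = gaborAtom L M (frameOp L a M g h) m' (n' * a) := by
  funext l
  set F : ℕ → ℕ → ℂ := fun n m =>
    ipL L (gaborAtom L M h m' (n' * a)) (gaborAtom L M g m (n * a)) * gaborAtom L M g m (n * a) l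
  have hm : ∀ n, Periodic (F n) M := fun n m => by
    simp only [F, gaborAtom_periodic g _ m]
  have hn : Periodic (fun n => ∑ m : Fin M, F n m) (L / a) := fun n => by
    simp only [F, gaborAtom_add_div_mul haL]
  calc frameOp L a M g (gaborAtom L M h m' (n' * a)) l
      = ∑ n : Fin (L / a), ∑ m : Fin M, F n m := rfl
    _ = ∑ n : Fin (L / a), ∑ m : Fin M, F (n + n') (m + m') := by
        simp only [(hm _).sum_fin_add]
        exact (hn.sum_fin_add n').symm
    _ = ∑ n : Fin (L / a), ∑ m : Fin M,
          ipL L h (gaborAtom L M g m (n * a)) * gaborAtom L M g m (n * a) (l - (n' * a : ℕ))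
            * modChar L M m' l := by
        refine sum_congr rfl fun n _ => sum_congr rfl fun m _ => ?_
        simp only [F, add_mul, ipL_gaborAtom_add hML, gaborAtom_add hML]
        linear_combination (ipL L h (gaborAtom L M g m (n * a)) * modChar L M m' l *
          gaborAtom L M g m (n * a) (l - (n' * a : ℕ))) *
            star_modChar_mul_self m ((n' * a : ℕ) : ZMod L)
    _ = gaborAtom L M (frameOp L a M g h) m' (n' * a) l := by
        simp only [gaborAtom_apply (frameOp L a M g h), frameOp, sum_mul]

section innerProduct

variable {L : ℕ} [NeZero L]

theorem ipL_eq_inner (f w : ZMod L → ℂ) :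
    ipL L f w = inner ℂ (WithLp.toLp 2 w : EuclideanSpace ℂ (ZMod L)) (WithLp.toLp 2 f) := by
  simp [ipL, PiLp.inner_apply]

theorem eq_zero_of_ipL_self_eq_zero {f : ZMod L → ℂ} (hf : ipL L f f = 0) : f = 0 := by
  rw [ipL_eq_inner, inner_self_eq_zero] at hf
  simpa using congrArg WithLp.ofLp hf

theorem ipL_sub_right (f v w : ZMod L → ℂ) : ipL L f (v - w) = ipL L f v - ipL L f w := by
  simp only [ipL, Pi.sub_apply, star_sub, mul_sub, sum_sub_distrib]

theorem sqrt_sum_norm_sq_lt_of_ipL_sub_eq_zero {γ h : ZMod L → ℂ} (hne : h ≠ γ)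
    (horth : ipL L (h - γ) γ = 0) :
    √(∑ l, ‖γ l‖ ^ 2) < √(∑ l, ‖h l‖ ^ 2) := by
  set x : EuclideanSpace ℂ (ZMod L) := WithLp.toLp 2 γ
  set y : EuclideanSpace ℂ (ZMod L) := WithLp.toLp 2 (h - γ)
  have hxy : inner ℂ x y = 0 := by rw [← ipL_eq_inner, horth]
  have hy : 0 < ‖y‖ := norm_pos_iff.mpr fun hy =>
    hne (by simpa [y, sub_eq_zero] using congrArg WithLp.ofLp hy)
  have hpyth := norm_add_sq_eq_norm_sq_add_norm_sq_of_inner_eq_zero x y hxy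
  have hsum : x + y = WithLp.toLp 2 h := by simp [x, y]
  rw [hsum] at hpyth
  calc √(∑ l, ‖γ l‖ ^ 2) = ‖x‖ := (EuclideanSpace.norm_eq x).symm
    _ < ‖(WithLp.toLp 2 h : EuclideanSpace ℂ (ZMod L))‖ :=
        lt_of_mul_self_lt_mul_self₀ (norm_nonneg _) (by nlinarith)
    _ = √(∑ l, ‖h l‖ ^ 2) := EuclideanSpace.norm_eq _

end innerProduct

noncomputable def mixedFrameOp (L a M : ℕ) [NeZero L] (h g f : ZMod L → ℂ) : ZMod L → ℂ :=
  fun l => ∑ n : Fin (L / a), ∑ m : Fin M,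
    ipL L f (gaborAtom L M h m ((n : ℕ) * a)) * gaborAtom L M g m ((n : ℕ) * a) l

section mixedFrameOp

variable {L a M : ℕ} [NeZero L]

theorem star_ipL (f w : ZMod L → ℂ) : star (ipL L f w) = ipL L w f := by
  simp only [ipL, star_sum, star_mul', star_star, mul_comm]

theorem ipL_single_one_left (l : ZMod L) (w : ZMod L → ℂ) :
    ipL L (Pi.single l 1) w = star (w l) := by
  simp [ipL, Pi.single_apply]

theorem isDualWindow_iff (g h : ZMod L → ℂ) :
    IsDualWindow L a M g h ↔ ∀ f, mixedFrameOp L a M h g f = f := by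
  simp only [IsDualWindow, funext_iff, mixedFrameOp, eq_comm]

theorem mixedFrameOp_sub_left (h γ g f : ZMod L → ℂ) :
    mixedFrameOp L a M (h - γ) g f = mixedFrameOp L a M h g f - mixedFrameOp L a M γ g f := by
  have hatom : ∀ m n, gaborAtom L M (h - γ) m n = gaborAtom L M h m n - gaborAtom L M γ m n :=
    fun m n => funext fun l => by simp only [gaborAtom_apply, Pi.sub_apply, sub_mul]
  funext l
  simp only [mixedFrameOp, Pi.sub_apply, hatom, ipL_sub_right, sub_mul, sum_sub_distrib]

theorem ipL_mixedFrameOp (h g f w : ZMod L → ℂ) :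
    ipL L (mixedFrameOp L a M h g f) w = ipL L f (mixedFrameOp L a M g h w) := by
  rw [ipL, ipL]
  simp only [mixedFrameOp, sum_mul, star_sum, mul_sum, star_mul', star_ipL]
  rw [sum_comm]
  conv_rhs => rw [sum_comm]
  refine sum_congr rfl fun n _ => ?_
  rw [sum_comm]
  conv_rhs => rw [sum_comm]
  refine sum_congr rfl fun m _ => ?_
  simp only [mul_assoc, ← mul_sum, mul_left_comm (f _), ← ipL.eq_1]
  ring

theorem mixedFrameOp_swap_eq_zero {h g : ZMod L → ℂ}
    (hzero : ∀ f, mixedFrameOp L a M h g f = 0) (w : ZMod L → ℂ) :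
    mixedFrameOp L a M g h w = 0 := by
  refine eq_zero_of_ipL_self_eq_zero ?_
  rw [ipL_mixedFrameOp, hzero]
  simp [ipL]

theorem sum_mixedFrameOp_single_apply (hML : M ∣ L) (h g : ZMod L → ℂ) :
    ∑ l, mixedFrameOp L a M h g (Pi.single l 1) l = ((L / a * M : ℕ) : ℂ) * ipL L g h := by
  simp only [mixedFrameOp, ipL_single_one_left]
  rw [sum_comm]
  simp_rw [sum_comm (s := univ (α := ZMod L))]
  simp only [mul_comm (star _), ← ipL.eq_1, ipL_gaborAtom_gaborAtom hML, sum_const, card_univ,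
    Fintype.card_fin, nsmul_eq_mul]
  push_cast
  ring

end mixedFrameOp

section canonicalDual

variable {L a M : ℕ} [NeZero L]

theorem ipL_frameOp (g f w : ZMod L → ℂ) :
    ipL L (frameOp L a M g f) w = ipL L f (frameOp L a M g w) :=
  ipL_mixedFrameOp g g f w

theorem mixedFrameOp_canonicalDual (haL : a ∣ L) (hML : M ∣ L) {g γ f f' : ZMod L → ℂ}
    (hγ : frameOp L a M g γ = g) (hf : frameOp L a M g f' = f) (w : ZMod L → ℂ) :
    mixedFrameOp L a M γ w f = mixedFrameOp L a M g w f' := by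
  funext l
  refine sum_congr rfl fun n _ => sum_congr rfl fun m _ => ?_
  rw [← hf, ipL_frameOp, frameOp_gaborAtom haL hML, hγ]

end canonicalDual

/-- if `G(g,a,M)` is a Gabor frame on `ℂ^L` (invertible frame operator
`S`), then the canonical dual window `γ = S⁻¹g` is a dual window for `g` and is the
unique minimizer of the `ℓ²`-norm among all dual windows: any other dual window `h`
satisfies `‖γ‖₂ < ‖h‖₂`. -/
theorem canonical_dual_minimal_norm
    (L a M : ℕ) [NeZero L] (ha : 0 < a) (hM : 0 < M) (haL : a ∣ L) (hML : M ∣ L)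
    (g : ZMod L → ℂ)
    (hframe : Function.Bijective (frameOp L a M g))
    (γ : ZMod L → ℂ) (hγ : frameOp L a M g γ = g) :
    IsDualWindow L a M g γ ∧
    ∀ h : ZMod L → ℂ, IsDualWindow L a M g h → h ≠ γ →
      Real.sqrt (∑ l : ZMod L, ‖γ l‖ ^ 2) < Real.sqrt (∑ l : ZMod L, ‖h l‖ ^ 2) := by
  obtain ⟨S', hS'⟩ := hframe.2.hasRightInverse
  have hdual : IsDualWindow L a M g γ := (isDualWindow_iff g γ).2 fun f =>
    (mixedFrameOp_canonicalDual haL hML hγ (hS' f) g).trans (hS' f)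
  refine ⟨hdual, fun h hh hne => sqrt_sum_norm_sq_lt_of_ipL_sub_eq_zero hne ?_⟩
  have hmixed : ∀ f, mixedFrameOp L a M (h - γ) g f = 0 := fun f => by
    rw [mixedFrameOp_sub_left, (isDualWindow_iff g h).1 hh, (isDualWindow_iff g γ).1 hdual,
      sub_self]
  have hcard : ((L / a * M : ℕ) : ℂ) ≠ 0 :=
    Nat.cast_ne_zero.2 (Nat.mul_pos (Nat.div_pos (Nat.le_of_dvd (NeZero.pos L) haL) ha) hM).ne'
  refine (mul_eq_zero.1 ?_).resolve_left hcard
  rw [← sum_mixedFrameOp_single_apply hML γ (h - γ)]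
  refine sum_eq_zero fun l _ => ?_
  rw [mixedFrameOp_canonicalDual haL hML hγ (hS' _), mixedFrameOp_swap_eq_zero hmixed]
  rfl
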